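/- Let a ∈ ℂ be nonzero, and define f_a : ℤ → ℂ by f_a(i) = a^i / (|i| + 1). Define weights w : ℤ → ℂ by w(n) = (|n| + 1)/|n| if n < 0 and w(n) = (n + 1)/(n + 2) if n ≥ 0. Then for every n ∈ ℤ, w(n − 1) · f_a(n − 1) = a⁻¹ · f_a(n); that is, f_a is an eigenvector of the weighted shift operator X̃_ℤ (which maps the basis vector at n to w(n) times the basis vector at n+1) with eigenvalue a⁻¹. -/

import Mathlib

/-! The weights telescope: `w m = (|m| + 1) / (|m + 1| + 1)` for every `m ∈ ℤ`, so the factor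
`|n - 1| + 1` in `w (n - 1)` cancels the denominator of `f (n - 1)`, leaving
`a ^ (n - 1) / (|n| + 1) = a⁻¹ * f n`. -/

lemma weightedShift_weight_eq (m : ℤ) :
    (if m < 0 then (((|m| : ℤ) : ℂ) + 1) / ((|m| : ℤ) : ℂ) else ((m : ℂ) + 1) / ((m : ℂ) + 2)) =
      (((|m| : ℤ) : ℂ) + 1) / (((|m + 1| : ℤ) : ℂ) + 1) := by
  split_ifs with hm
  · rw [abs_of_neg hm, abs_of_nonpos (by omega : m + 1 ≤ 0)]
    push_cast
    ring
  · rw [abs_of_nonneg (by omega : 0 ≤ m), abs_of_nonneg (by omega : 0 ≤ m + 1)]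
    push_cast
    ring

/-- For nonzero `a ∈ ℂ`, the function `f_a(i) = a^i / (|i| + 1)` satisfies
`w(n−1) · f_a(n−1) = a⁻¹ · f_a(n)` for all `n ∈ ℤ`, where `w` are the weights of the
weighted shift operator `X̃_ℤ`; that is, `f_a` is an eigenvector of `X̃_ℤ` with
eigenvalue `a⁻¹`. -/
theorem fa_eigenvector_weighted_shift (a : ℂ) (ha : a ≠ 0)
    (f w : ℤ → ℂ)
    (hf : ∀ i : ℤ, f i = a ^ i / (((|i| : ℤ) : ℂ) + 1))
    (hw : ∀ n : ℤ, w n = if n < 0 then (((|n| : ℤ) : ℂ) + 1) / ((|n| : ℤ) : ℂ)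
      else ((n : ℂ) + 1) / ((n : ℂ) + 2)) :
    ∀ n : ℤ, w (n - 1) * f (n - 1) = a⁻¹ * f n := by
  intro n
  have hne : ((|n - 1| : ℤ) : ℂ) + 1 ≠ 0 := by
    exact_mod_cast (by positivity : (|n - 1| + 1 : ℤ) ≠ 0)
  rw [hw, weightedShift_weight_eq, sub_add_cancel, hf, hf, zpow_sub_one₀ ha]
  field_simp
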